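/- Let u be a bounded classical solution of the damped driven NLS (the feedback equation with μ = 0), and let w be a bounded classical solution of the feedback equation with the same γ and f, with μ > 0 and datum v(s) = P_m u(s,·). Set δ = w − u. Then for every s ∈ ℝ, (1/2)(d/ds)‖δ(s,·)‖² + γ‖δ(s,·)‖² + μ‖P_m δ(s,·)‖² = −Im ∫₀^L w(s,x)·u(s,x)·(conj δ(s,x))² dx. -/

import Mathlib

open MeasureTheory Finset

/-- The `L²` norm `(∫₀^L ‖g x‖² dx)^{1/2}` of a function on the circle `AddCircle L`
(recall that the standard measure on `AddCircle L` has total mass `L`). -/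
noncomputable def l2norm (L : ℝ) [Fact (0 < L)] (g : AddCircle L → ℂ) : ℝ :=
  Real.sqrt (∫ x : AddCircle L, ‖g x‖ ^ 2)

/-- The trigonometric polynomial `x ↦ ∑_{|k| ≤ N} c k · e^{2πikx/L}` on `AddCircle L`. -/
noncomputable def trigSum (L : ℝ) (N : ℕ) (c : ℤ → ℂ) : AddCircle L → ℂ :=
  fun x => ∑ k ∈ Finset.Icc (-(N : ℤ)) (N : ℤ), c k * fourier k x

/-- The low-mode Fourier projection `P_N g = ∑_{|k| ≤ N} ĝ(k) e^{2πikx/L}`. -/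
noncomputable def lowProj (L : ℝ) [Fact (0 < L)] (N : ℕ) (g : AddCircle L → ℂ) :
    AddCircle L → ℂ :=
  trigSum L N (fun k => fourierCoeff g k)

/-- A bounded classical solution of the feedback equation
`i ∂ₛ w + ∂ₓ² w + |w|² w + iγ w = f - iμ (P_m w - v(s))` on `ℝ × AddCircle L`,
where the datum is `v(s) = ∑_{|k| ≤ m} (vc k s) e^{2πikx/L}`: `w` is C¹ in `s` and C² in `x`
with these derivatives jointly continuous, and
`sup_s (‖w(s)‖_∞ + ‖∂ₓ w(s)‖ + ‖∂ₛ w(s)‖) < ∞`.  Taking `μ = 0` gives a bounded classical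
solution of the damped driven NLS `i ∂ₛ w + ∂ₓ² w + |w|² w + iγ w = f`. -/
structure FeedbackSol (L : ℝ) [Fact (0 < L)] (γ μ : ℝ) (m : ℕ)
    (f : AddCircle L → ℂ) (vc : ℤ → ℝ → ℂ) where
  /-- the solution -/
  w : ℝ → AddCircle L → ℂ
  /-- the time derivative `∂ₛ w` -/
  ws : ℝ → AddCircle L → ℂ
  /-- the spatial derivative `∂ₓ w` -/
  wx : ℝ → AddCircle L → ℂ
  /-- the second spatial derivative `∂ₓ² w` -/
  wxx : ℝ → AddCircle L → ℂ
  hws : ∀ (x : AddCircle L) (s : ℝ), HasDerivAt (fun σ : ℝ => w σ x) (ws s x) s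
  hwx : ∀ (s t : ℝ), HasDerivAt (fun τ : ℝ => w s (τ : AddCircle L)) (wx s (t : AddCircle L)) t
  hwxx : ∀ (s t : ℝ),
    HasDerivAt (fun τ : ℝ => wx s (τ : AddCircle L)) (wxx s (t : AddCircle L)) t
  hw_cont : Continuous fun p : ℝ × AddCircle L => w p.1 p.2
  hws_cont : Continuous fun p : ℝ × AddCircle L => ws p.1 p.2
  hwx_cont : Continuous fun p : ℝ × AddCircle L => wx p.1 p.2
  hwxx_cont : Continuous fun p : ℝ × AddCircle L => wxx p.1 p.2
  heq : ∀ (s : ℝ) (x : AddCircle L),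
    Complex.I * ws s x + wxx s x + Complex.ofReal (‖w s x‖ ^ 2) * w s x
      + Complex.I * (γ : ℂ) * w s x
      = f x - Complex.I * (μ : ℂ) * (lowProj L m (w s) x - trigSum L m (fun k => vc k s) x)
  hbdd : ∃ C : ℝ, ∀ s : ℝ,
    (⨆ x : AddCircle L, ‖w s x‖) + l2norm L (wx s) + l2norm L (ws s) ≤ C

/-- The `X`-norm `|v|_X = sup_s ‖v(s)‖ + sup_s ‖∂ₛ v(s)‖` of a datum with coefficients `vc`. -/
noncomputable def vnormX (L : ℝ) [Fact (0 < L)] (m : ℕ) (vc : ℤ → ℝ → ℂ) : ℝ :=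
  (⨆ s : ℝ, l2norm L (trigSum L m (fun k => vc k s)))
    + ⨆ s : ℝ, l2norm L (trigSum L m (fun k => deriv (vc k) s))

/-- `vc` are the coefficients of an admissible datum: a continuously differentiable map
from `ℝ` into trigonometric polynomials of degree ≤ m, with `|v|_X < ∞`. -/
def IsDatum (L : ℝ) [Fact (0 < L)] (m : ℕ) (vc : ℤ → ℝ → ℂ) : Prop :=
  (∀ k : ℤ, ContDiff ℝ 1 (vc k)) ∧
    ∃ C : ℝ, ∀ s : ℝ,
      l2norm L (trigSum L m (fun k => vc k s))
        + l2norm L (trigSum L m (fun k => deriv (vc k) s)) ≤ C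

/-!
Differentiating under the integral gives `d/ds ‖δ‖² = 2 Re ∫ ∂ₛδ · conj δ`, and subtracting the
two equations (the forcing cancels) gives `∂ₛδ = i ∂ₓ²δ + i (|w|²w - |u|²u) - γδ - μ P_m δ`.
Integration by parts on the circle makes `∫ ∂ₓ²δ · conj δ = -‖∂ₓδ‖²` real, so dispersion does not
contribute; `P_m` is an orthogonal projection, so `∫ P_m δ · conj δ = ‖P_m δ‖²`; and
`(|w|²w - |u|²u) conj δ - w u (conj δ)²` is real, which turns the nonlinear term into
`-Im ∫ w u (conj δ)²`.
-/

section General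

open ComplexConjugate

theorem Continuous.integrable_of_compactSpace {X E : Type*} [TopologicalSpace X] [CompactSpace X]
    [MeasurableSpace X] [OpensMeasurableSpace X] [NormedAddCommGroup E]
    {μ : Measure X} [IsFiniteMeasure μ] {g : X → E} (hg : Continuous g) : Integrable g μ :=
  hg.integrable_of_hasCompactSupport (.of_compactSpace g)

variable {X : Type*} [TopologicalSpace X] [CompactSpace X] [MeasurableSpace X]
  [OpensMeasurableSpace X] {μ : Measure X} [IsFiniteMeasure μ]

open scoped RealInnerProductSpace in
theorem hasDerivAt_integral_norm_sq {E : Type*} [NormedAddCommGroup E] [InnerProductSpace ℝ E]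
    {F F' : ℝ → X → E} (hF : Continuous fun p : ℝ × X => F p.1 p.2)
    (hF' : Continuous fun p : ℝ × X => F' p.1 p.2)
    (hderiv : ∀ x σ, HasDerivAt (F · x) (F' σ x) σ) (s : ℝ) :
    HasDerivAt (fun σ => ∫ x, ‖F σ x‖ ^ 2 ∂μ) (∫ x, 2 * ⟪F s x, F' s x⟫ ∂μ) s := by
  have hslice : ∀ σ, Continuous fun x => ‖F σ x‖ ^ 2 := fun σ =>
    ((hF.uncurry_left σ).norm).pow 2
  have hG : Continuous fun p : ℝ × X => 2 * ⟪F p.1 p.2, F' p.1 p.2⟫ :=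
    continuous_const.mul (hF.inner hF')
  obtain ⟨C, hC⟩ := (isCompact_closedBall s 1).prod isCompact_univ
    |>.exists_bound_of_continuousOn hG.continuousOn
  refine (hasDerivAt_integral_of_dominated_loc_of_deriv_le (bound := fun _ => C)
    (Metric.ball_mem_nhds s one_pos) (.of_forall fun σ => (hslice σ).aestronglyMeasurable)
    (hslice s).integrable_of_compactSpace (hG.uncurry_left s).aestronglyMeasurable
    (.of_forall fun x σ hσ => hC (σ, x) ⟨Metric.ball_subset_closedBall hσ, trivial⟩)
    (integrable_const C) (.of_forall fun x σ _ => (hderiv x σ).norm_sq)).2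

theorem Complex.im_cubic_sub_mul_conj_sub (a b : ℂ) :
    (((‖a‖ ^ 2 : ℝ) * a - (‖b‖ ^ 2 : ℝ) * b) * conj (a - b)).im
      = (a * b * conj (a - b) ^ 2).im := by
  rw [Complex.sq_norm, Complex.sq_norm]
  simp only [Complex.normSq_apply, mul_im, mul_re, sub_re, sub_im, ofReal_re, ofReal_im, conj_re,
    conj_im, pow_two]
  ring

theorem integral_im_cubic_sub_mul_conj_sub {a b : X → ℂ} (ha : Continuous a) (hb : Continuous b) :
    (∫ x, ((‖a x‖ ^ 2 : ℝ) * a x - (‖b x‖ ^ 2 : ℝ) * b x) * conj (a x - b x) ∂μ).im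
      = (∫ x, a x * b x * conj (a x - b x) ^ 2 ∂μ).im := by
  simp_rw [← RCLike.im_to_complex]
  rw [← integral_im (by fun_prop : Continuous _).integrable_of_compactSpace,
    ← integral_im (by fun_prop : Continuous _).integrable_of_compactSpace]
  simp_rw [RCLike.im_to_complex, Complex.im_cubic_sub_mul_conj_sub]

end General

section Circle

open AddCircle ComplexConjugate

@[fun_prop]
theorem continuous_trigSum {L : ℝ} (N : ℕ) (c : ℤ → ℂ) : Continuous (trigSum L N c) :=
  continuous_finsetSum _ fun k _ => continuous_const.mul (fourier k).continuous

theorem trigSum_eq_sum_smul {L : ℝ} (N : ℕ) (c : ℤ → ℂ) :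
    trigSum L N c = ∑ k ∈ Icc (-(N : ℤ)) N, c k • ⇑(fourier k) := by
  ext x
  simp [trigSum]

variable {L : ℝ} [Fact (0 < L)]

@[fun_prop]
theorem continuous_lowProj (N : ℕ) (g : AddCircle L → ℂ) : Continuous (lowProj L N g) :=
  continuous_trigSum _ _

theorem l2norm_sq (g : AddCircle L → ℂ) : l2norm L g ^ 2 = ∫ x, ‖g x‖ ^ 2 :=
  Real.sq_sqrt (integral_nonneg fun _ => sq_nonneg _)

theorem integral_mul_conj_self (g : AddCircle L → ℂ) :
    ∫ x, g x * conj (g x) = ((l2norm L g ^ 2 : ℝ) : ℂ) := by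
  simp_rw [Complex.mul_conj, Complex.normSq_eq_norm_sq, l2norm_sq]
  exact integral_ofReal

theorem fourierCoeff_trigSum {N : ℕ} (c : ℤ → ℂ) {k : ℤ} (hk : k ∈ Icc (-(N : ℤ)) N) :
    fourierCoeff (trigSum L N c) k = c k := by
  rw [trigSum_eq_sum_smul, fourierCoeff.sum _ _ fun j _ =>
    ((fourier j).continuous.const_smul (c j)).integrable_of_compactSpace]
  simp [fourierCoeff.const_smul, fourierCoeff_fourier, Pi.single_apply, hk]

theorem integral_fourier_mul_conj (g : AddCircle L → ℂ) (k : ℤ) :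
    ∫ x, fourier k x * conj (g x) = L * conj (fourierCoeff g k) := by
  rw [fourierCoeff, ← integral_conj, integral_haarAddCircle, Complex.real_smul, ← mul_assoc,
    ← Complex.ofReal_mul, mul_inv_cancel₀ (Fact.out : 0 < L).ne', Complex.ofReal_one, one_mul]
  simp

theorem integral_trigSum_mul_conj (N : ℕ) (c : ℤ → ℂ) {g : AddCircle L → ℂ}
    (hg : Integrable g) :
    ∫ x, trigSum L N c x * conj (g x)
      = L * ∑ k ∈ Icc (-(N : ℤ)) N, c k * conj (fourierCoeff g k) := by
  simp_rw [trigSum, Finset.sum_mul, Finset.mul_sum, mul_assoc]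
  rw [integral_finsetSum]
  · refine Finset.sum_congr rfl fun k _ => ?_
    rw [integral_const_mul, integral_fourier_mul_conj]
    ring
  · intro k _
    refine (Integrable.bdd_mul (c := 1) ?_ (fourier k).continuous.aestronglyMeasurable
      (ae_of_all _ fun x => ?_)).const_mul (c k)
    · exact Complex.conjCLE.toContinuousLinearMap.integrable_comp hg
    · simp only [fourier_apply, Circle.norm_coe, le_refl]

/-- `P_N g` and `g` have the same Fourier coefficients up to order `N`, so pairing either of them
with `P_N g` gives the same result. -/
theorem integral_lowProj_mul_conj (N : ℕ) {g : AddCircle L → ℂ} (hg : Integrable g) :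
    ∫ x, lowProj L N g x * conj (g x) = ((l2norm L (lowProj L N g) ^ 2 : ℝ) : ℂ) := by
  rw [← integral_mul_conj_self, lowProj, integral_trigSum_mul_conj _ _ hg,
    integral_trigSum_mul_conj _ _ (continuous_trigSum _ _).integrable_of_compactSpace]
  congr 1
  exact Finset.sum_congr rfl fun k hk => by rw [fourierCoeff_trigSum _ hk]

theorem lowProj_sub (N : ℕ) {g h : AddCircle L → ℂ}
    (hg : Integrable g haarAddCircle) (hh : Integrable h haarAddCircle) :
    lowProj L N (fun x => g x - h x) = lowProj L N g - lowProj L N h := by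
  have hcoeff : ∀ k, fourierCoeff (fun x => g x - h x) k = fourierCoeff g k - fourierCoeff h k :=
    fun k => by
      simp only [fourierCoeff, smul_sub]
      exact integral_sub (hg.fourier_smul (-k)) (hh.fourier_smul (-k))
  ext x
  simp [lowProj, trigSum, hcoeff, sub_mul]

theorem AddCircle.integral_eq_zero_of_hasDerivAt {E : Type*} [NormedAddCommGroup E]
    [NormedSpace ℝ E] [CompleteSpace E] {G G' : AddCircle L → E}
    (hG : ∀ t : ℝ, HasDerivAt (fun τ : ℝ => G τ) (G' t) t) (hG' : Continuous G') :
    ∫ x, G' x = 0 := by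
  have hperiod : ((0 + L : ℝ) : AddCircle L) = ((0 : ℝ) : AddCircle L) := by simp
  rw [← AddCircle.intervalIntegral_preimage L 0,
    intervalIntegral.integral_eq_sub_of_hasDerivAt (fun t _ => hG t)
      ((hG'.comp (AddCircle.continuous_mk' L)).intervalIntegrable _ _), hperiod, sub_self]

theorem AddCircle.integral_secondDeriv_mul_conj {D Dx Dxx : AddCircle L → ℂ}
    (hD : ∀ t : ℝ, HasDerivAt (fun τ : ℝ => D τ) (Dx t) t)
    (hDx : ∀ t : ℝ, HasDerivAt (fun τ : ℝ => Dx τ) (Dxx t) t)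
    (hDc : Continuous D) (hDxc : Continuous Dx) (hDxxc : Continuous Dxx) :
    ∫ x, Dxx x * conj (D x) = -((l2norm L Dx ^ 2 : ℝ) : ℂ) := by
  have hproduct : ∀ t : ℝ, HasDerivAt (fun τ : ℝ => Dx τ * conj (D τ))
      (Dxx t * conj (D t) + Dx t * conj (Dx t)) t := fun t =>
    (hDx t).mul (hD t).star
  have := AddCircle.integral_eq_zero_of_hasDerivAt (G := fun x => Dx x * conj (D x))
    (G' := fun x => Dxx x * conj (D x) + Dx x * conj (Dx x)) hproduct (by fun_prop)
  rw [integral_add (by fun_prop : Continuous _).integrable_of_compactSpace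
    (by fun_prop : Continuous _).integrable_of_compactSpace, integral_mul_conj_self] at this
  exact eq_neg_of_add_eq_zero_left this

namespace FeedbackSol

variable {γ μ : ℝ} {m : ℕ} {f : AddCircle L → ℂ}

theorem ws_sub_ws (U : FeedbackSol L γ 0 0 f (fun _ _ => 0))
    (W : FeedbackSol L γ μ m f (fun k s => fourierCoeff (U.w s) k)) (s : ℝ) (x : AddCircle L) :
    W.ws s x - U.ws s x
      = Complex.I * (W.wxx s x - U.wxx s x)
        + Complex.I * ((‖W.w s x‖ ^ 2 : ℝ) * W.w s x - (‖U.w s x‖ ^ 2 : ℝ) * U.w s x)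
        - γ * (W.w s x - U.w s x) - μ * lowProj L m (fun y => W.w s y - U.w s y) x := by
  have hW := W.heq s x
  have hU := U.heq s x
  rw [show trigSum L m (fun k => fourierCoeff (U.w s) k) = lowProj L m (U.w s) from rfl] at hW
  rw [lowProj_sub m ((W.hw_cont.uncurry_left s).integrable_of_compactSpace)
    ((U.hw_cont.uncurry_left s).integrable_of_compactSpace), Pi.sub_apply]
  simp only [Complex.ofReal_zero, zero_mul, mul_zero, sub_zero] at hU
  linear_combination (-Complex.I) * hW + Complex.I * hU
    + (W.ws s x - U.ws s x + γ * (W.w s x - U.w s x)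
      + μ * (lowProj L m (W.w s) x - lowProj L m (U.w s) x)) * Complex.I_mul_I

theorem integral_ws_sub_ws_mul_conj (U : FeedbackSol L γ 0 0 f (fun _ _ => 0))
    (W : FeedbackSol L γ μ m f (fun k s => fourierCoeff (U.w s) k)) (s : ℝ) :
    ∫ x, (W.ws s x - U.ws s x) * conj (W.w s x - U.w s x)
      = Complex.I * -(l2norm L (fun x => W.wx s x - U.wx s x) ^ 2 : ℝ)
        + Complex.I * (∫ x, ((‖W.w s x‖ ^ 2 : ℝ) * W.w s x - (‖U.w s x‖ ^ 2 : ℝ) * U.w s x)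
            * conj (W.w s x - U.w s x))
        - γ * (l2norm L (fun x => W.w s x - U.w s x) ^ 2 : ℝ)
        - μ * (l2norm L (lowProj L m fun x => W.w s x - U.w s x) ^ 2 : ℝ) := by
  have := W.hw_cont.uncurry_left s
  have := U.hw_cont.uncurry_left s
  have := W.hwx_cont.uncurry_left s
  have := U.hwx_cont.uncurry_left s
  have := W.hwxx_cont.uncurry_left s
  have := U.hwxx_cont.uncurry_left s
  have hδ : Continuous fun x => W.w s x - U.w s x := by fun_prop
  have hpointwise : ∀ x, (W.ws s x - U.ws s x) * conj (W.w s x - U.w s x)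
      = Complex.I * ((W.wxx s x - U.wxx s x) * conj (W.w s x - U.w s x))
        + Complex.I * (((‖W.w s x‖ ^ 2 : ℝ) * W.w s x - (‖U.w s x‖ ^ 2 : ℝ) * U.w s x)
            * conj (W.w s x - U.w s x))
        - γ * ((W.w s x - U.w s x) * conj (W.w s x - U.w s x))
        - μ * (lowProj L m (fun y => W.w s y - U.w s y) x * conj (W.w s x - U.w s x)) :=
    fun x => by rw [ws_sub_ws U W s x]; ring
  simp_rw [hpointwise]
  rw [integral_sub, integral_sub, integral_add, integral_const_mul, integral_const_mul,
    integral_const_mul, integral_const_mul,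
    AddCircle.integral_secondDeriv_mul_conj (D := fun x => W.w s x - U.w s x)
      (Dx := fun x => W.wx s x - U.wx s x) (Dxx := fun x => W.wxx s x - U.wxx s x)
      (fun t => (W.hwx s t).sub (U.hwx s t)) (fun t => (W.hwxx s t).sub (U.hwxx s t)) hδ
      (by fun_prop) (by fun_prop),
    integral_mul_conj_self, integral_lowProj_mul_conj m hδ.integrable_of_compactSpace]
  all_goals exact (by fun_prop : Continuous _).integrable_of_compactSpace

end FeedbackSol

end Circle

theorem difference_energy_identity_general (L : ℝ) [Fact (0 < L)] (γ μ : ℝ) (m : ℕ) (f : AddCircle L → ℂ)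
    (U : FeedbackSol L γ 0 0 f (fun _ _ => 0))
    (W : FeedbackSol L γ μ m f (fun k s => fourierCoeff (U.w s) k)) (s : ℝ) :
    HasDerivAt (fun σ : ℝ => (l2norm L (fun x => W.w σ x - U.w σ x)) ^ 2)
      (2 * (-(∫ x : AddCircle L,
          W.w s x * U.w s x * ((starRingEnd ℂ) (W.w s x - U.w s x)) ^ 2).im
        - γ * (l2norm L (fun x => W.w s x - U.w s x)) ^ 2
        - μ * (l2norm L (lowProj L m (fun x => W.w s x - U.w s x))) ^ 2)) s := by
  have hW := W.hw_cont.uncurry_left s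
  have hU := U.hw_cont.uncurry_left s
  have := W.hws_cont.uncurry_left s
  have := U.hws_cont.uncurry_left s
  convert hasDerivAt_integral_norm_sq (μ := volume) (F := fun σ x => W.w σ x - U.w σ x)
    (F' := fun σ x => W.ws σ x - U.ws σ x) (W.hw_cont.sub U.hw_cont)
    (W.hws_cont.sub U.hws_cont) (fun x σ => (W.hws x σ).sub (U.hws x σ)) s using 1
  · exact funext fun σ => l2norm_sq _
  simp_rw [Complex.inner, ← RCLike.re_to_complex]
  rw [integral_const_mul, integral_re (by fun_prop : Continuous _).integrable_of_compactSpace,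
    RCLike.re_to_complex, FeedbackSol.integral_ws_sub_ws_mul_conj U W s,
    ← integral_im_cubic_sub_mul_conj_sub hW hU]
  simp only [Complex.sub_re, Complex.add_re, Complex.I_mul_re, Complex.re_ofReal_mul,
    Complex.neg_im, Complex.ofReal_im, Complex.ofReal_re]
  ring

/-- energy identity for the difference `δ = w - u`: if `u` is a bounded
classical solution of the damped driven NLS and `w` is a bounded classical solution of the
feedback equation with datum `v(s) = P_m u(s,·)`, then for every `s ∈ ℝ`,
`(1/2)(d/ds)‖δ(s)‖² + γ‖δ(s)‖² + μ‖P_m δ(s)‖² = -Im ∫ w·u·(conj δ)²`. -/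
theorem difference_energy_identity (L : ℝ) [Fact (0 < L)] (γ μ : ℝ) (hγ : 0 < γ)
    (hμ : 0 < μ) (m : ℕ) (f : AddCircle L → ℂ) (hf : Continuous f)
    (U : FeedbackSol L γ 0 0 f (fun _ _ => 0))
    (W : FeedbackSol L γ μ m f (fun k s => fourierCoeff (U.w s) k)) (s : ℝ) :
    HasDerivAt (fun σ : ℝ => (l2norm L (fun x => W.w σ x - U.w σ x)) ^ 2)
      (2 * (-(∫ x : AddCircle L,
          W.w s x * U.w s x * ((starRingEnd ℂ) (W.w s x - U.w s x)) ^ 2).im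
        - γ * (l2norm L (fun x => W.w s x - U.w s x)) ^ 2
        - μ * (l2norm L (lowProj L m (fun x => W.w s x - U.w s x))) ^ 2)) s :=
  difference_energy_identity_general L γ μ m f U W s
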